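/- Let d be a positive divisor of n and let π be a permutation of ℤ/nℤ. Then there exists k ∈ ℤ/nℤ with π(i+d) = π(i) + k for all i ∈ ℤ/nℤ if and only if the cardinality of the 1-cycle (orbit under inc(ρ) ↦ inc(ρ∘σ)) containing the class inc(π) divides d. -/

import Mathlib

open Equiv Filter Topology

/-- The cyclic permutation `σ : i ↦ i + 1` of `ZMod n`. -/
def cyc (n : ℕ) : Equiv.Perm (ZMod n) := Equiv.addRight (1 : ZMod n)

/-- The equivalence relation `R₂`: `π R₂ π'` iff `π' = σ^i ∘ π` for some integer `i`. -/
def incSetoid (n : ℕ) : Setoid (Equiv.Perm (ZMod n)) where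
  r π π' := ∃ i : ℤ, π' = cyc n ^ i * π
  iseqv := by
    constructor
    · exact fun π => ⟨0, by simp⟩
    · rintro π π' ⟨i, rfl⟩
      exact ⟨-i, by rw [← mul_assoc, ← zpow_add]; simp⟩
    · rintro a b c ⟨i, rfl⟩ ⟨j, rfl⟩
      exact ⟨j + i, by rw [← mul_assoc, ← zpow_add]⟩

/-- The set of `R₂`-equivalence classes. -/
def IncClasses (n : ℕ) := Quotient (incSetoid n)

/-- The well-defined map `inc(π) ↦ inc(π ∘ σ)` on `R₂`-classes. -/
def incShift (n : ℕ) : IncClasses n → IncClasses n :=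
  Quot.map (fun π => π * cyc n)
    (by rintro π π' ⟨i, rfl⟩; exact ⟨i, mul_assoc _ _ _⟩)

/-- The 1-cycle (orbit under `inc(ρ) ↦ inc(ρ∘σ)`) of a class `q`. -/
def oneCycle (n : ℕ) (q : IncClasses n) : Set (IncClasses n) :=
  Set.range fun i : ℕ => (incShift n)^[i] q

lemma cyc_pow_apply (n : ℕ) (j : ℕ) (x : ZMod n) : (cyc n ^ j) x = x + j := by
  induction j with
  | zero => simp
  | succ k ih =>
    rw [pow_succ', Equiv.Perm.mul_apply]
    have hc : ∀ y : ZMod n, (cyc n) y = y + 1 := fun _ => rfl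
    rw [hc, ih]; push_cast; ring

lemma cyc_zpow_apply (n : ℕ) (j : ℤ) (x : ZMod n) : (cyc n ^ j) x = x + (j : ZMod n) := by
  induction j using Int.rec with
  | ofNat k => simpa using cyc_pow_apply n k x
  | negSucc k =>
    have h := cyc_pow_apply n (k+1) (x - ((k:ZMod n)+1))
    have h2 : (cyc n ^ (k+1 : ℕ))⁻¹ x = x - ((k:ZMod n)+1) := by
      rw [Equiv.Perm.inv_eq_iff_eq, h]
      push_cast; ring
    rw [zpow_negSucc, h2]
    push_cast; ring

lemma incShift_iterate (n : ℕ) (ρ : Equiv.Perm (ZMod n)) (j : ℕ) :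
    (incShift n)^[j] (Quotient.mk (incSetoid n) ρ) = Quotient.mk (incSetoid n) (ρ * cyc n ^ j) := by
  induction j with
  | zero => simp; rfl
  | succ k ih =>
    refine (Function.iterate_succ_apply' (incShift n) k _).trans ?_
    rw [ih]
    show Quot.map _ _ _ = _
    rw [pow_succ, ← mul_assoc]
    rfl

/-- For a positive divisor `d` of `n` and a permutation `π` of `ℤ/nℤ`: there is `k ∈ ℤ/nℤ`
with `π(i+d) = π(i) + k` for all `i` iff the cardinality of the 1-cycle containing `inc(π)`
divides `d`. -/
theorem stmt9 (n d : ℕ) (hn : 1 ≤ n) (hd : 0 < d) (hdvd : d ∣ n) (π : Equiv.Perm (ZMod n)) :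
    (∃ k : ZMod n, ∀ i : ZMod n, π (i + (d : ZMod n)) = π i + k) ↔
      (oneCycle n (Quotient.mk (incSetoid n) π)).ncard ∣ d := by
  haveI : NeZero n := ⟨by omega⟩
  set f := incShift n
  set q : IncClasses n := Quotient.mk (incSetoid n) π with hq
  have hpn : Function.IsPeriodicPt f n q := by
    show f^[n] q = q
    rw [hq, incShift_iterate]
    congr 1
    have : (cyc n : Equiv.Perm (ZMod n)) ^ n = 1 := by
      ext x; rw [cyc_pow_apply]; simp
    rw [this, mul_one]
  have hm : 0 < Function.minimalPeriod f q :=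
    Function.IsPeriodicPt.minimalPeriod_pos hn hpn
  set m := Function.minimalPeriod f q with hmdef
  have horb : oneCycle n q = (fun i : ℕ => f^[i] q) '' Set.Iio m := by
    apply Set.eq_of_subset_of_subset
    · rintro _ ⟨i, rfl⟩
      exact ⟨i % m, Nat.mod_lt _ hm, Function.iterate_mod_minimalPeriod_eq⟩
    · rintro _ ⟨i, _, rfl⟩
      exact ⟨i, rfl⟩
  have hcard : (oneCycle n q).ncard = m := by
    rw [horb, Set.ncard_image_of_injOn Function.iterate_injOn_Iio_minimalPeriod,
      ← Finset.coe_range, Set.ncard_coe_finset, Finset.card_range]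
  rw [hcard]
  rw [← Function.isPeriodicPt_iff_minimalPeriod_dvd]
  show _ ↔ f^[d] q = q
  rw [hq, incShift_iterate]
  constructor
  · rintro ⟨k, hk⟩
    apply Quotient.sound
    refine (incSetoid n).symm ⟨(k.val : ℤ), ?_⟩
    ext x
    simp only [Equiv.Perm.mul_apply, cyc_pow_apply, cyc_zpow_apply, hk x]
    congr 1
    rw [Int.cast_natCast, ZMod.natCast_val, ZMod.cast_id]
  · intro h
    obtain ⟨i, hi⟩ := (incSetoid n).symm (Quotient.exact h)
    refine ⟨(i : ZMod n), fun x => ?_⟩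
    have := congrArg (fun ρ : Equiv.Perm (ZMod n) => ρ x) hi
    simpa [Equiv.Perm.mul_apply, cyc_pow_apply, cyc_zpow_apply] using this
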